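/- arXiv:2105.00087 — 2 statements merged into one kernel-verified Lean document; each statement's English description precedes it below -/
import Mathlib

section
/- Let K be a Hausdorff topological field (multiplication and addition continuous), let N be a positive integer, and let X be an N×N matrix over K. Suppose (g_i) is a sequence of invertible N×N matrices over K and (λ_i) is a sequence in K converging to 0, and suppose that the sequence of rescaled conjugates λ_i · (g_i X g_i^{-1}) converges entrywise to a matrix Z. Then Z is nilpotent; in fact Z^N = 0. -/
/-!
The characteristic polynomial is a conjugation invariant, and the coefficient of `T ^ k` in the
characteristic polynomial of an `n × n` matrix is a homogeneous polynomial of degree `n - k` in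
its entries. Hence for `k < n` that coefficient of `λᵢ • gᵢ X gᵢ⁻¹` equals `λᵢ ^ (n - k)` times
the one of `X`, and tends to `0`; by continuity it tends to the corresponding coefficient of `Z`.
So `Z` has characteristic polynomial `T ^ n`, and Cayley–Hamilton gives `Z ^ n = 0`.
-/

open Filter Topology Polynomial

theorem MvPolynomial.IsHomogeneous.eval_const_mul {σ R : Type*} [CommSemiring R]
    {φ : MvPolynomial σ R} {n : ℕ} (hφ : φ.IsHomogeneous n) (c : R) (x : σ → R) :
    eval (fun i => c * x i) φ = c ^ n * eval x φ := by
  rw [eval_eq, eval_eq, Finset.mul_sum]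
  refine Finset.sum_congr rfl fun d hd => ?_
  have hdeg : ∑ i ∈ d.support, d i = n := by
    simpa [Finsupp.weight_apply, Finsupp.sum] using hφ (mem_support_iff.mp hd)
  simp only [mul_pow, Finset.prod_mul_distrib, Finset.prod_pow_eq_pow_sum, hdeg]
  ring

namespace Matrix

variable {n R : Type*} [Fintype n] [DecidableEq n] [CommRing R]

theorem charpoly_coeff_eq_eval_univ_coeff (M : Matrix n n R) (k : ℕ) :
    M.charpoly.coeff k =
      MvPolynomial.eval (fun p : n × n => M p.1 p.2) ((charpoly.univ R n).coeff k) :=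
  (charpoly.univ_coeff_eval₂Hom n (RingHom.id R) (fun p : n × n => M p.1 p.2) k).symm

theorem charpoly_coeff_smul (c : R) (M : Matrix n n R) {k j : ℕ}
    (hkj : k + j = Fintype.card n) :
    (c • M).charpoly.coeff k = c ^ j * M.charpoly.coeff k := by
  rw [charpoly_coeff_eq_eval_univ_coeff (c • M), charpoly_coeff_eq_eval_univ_coeff M]
  exact (charpoly.univ_coeff_isHomogeneous R n k j hkj).eval_const_mul c _

theorem charpoly_units_conj_inv (g : (Matrix n n R)ˣ) (M : Matrix n n R) :
    ((g : Matrix n n R) * M * (↑g⁻¹ : Matrix n n R)).charpoly = M.charpoly := by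
  rw [charpoly_mul_comm, ← mul_assoc, Units.inv_mul, one_mul]

theorem continuous_charpoly_coeff [TopologicalSpace R] [IsTopologicalRing R] (k : ℕ) :
    Continuous fun M : Matrix n n R => M.charpoly.coeff k := by
  have hentries : Continuous fun (M : Matrix n n R) (p : n × n) => M p.1 p.2 := by fun_prop
  exact ((MvPolynomial.continuous_eval ((charpoly.univ R n).coeff k)).comp hentries).congr
    fun M => (charpoly_coeff_eq_eval_univ_coeff M k).symm

theorem charpoly_eq_X_pow_card_of_coeff_eq_zero {M : Matrix n n R}
    (h : ∀ k < Fintype.card n, M.charpoly.coeff k = 0) :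
    M.charpoly = X ^ Fintype.card n := by
  nontriviality R
  rw [M.charpoly_monic.as_sum, charpoly_natDegree_eq_dim, add_eq_left]
  exact Finset.sum_eq_zero fun k hk => by rw [h k (Finset.mem_range.mp hk), C_0, zero_mul]

theorem pow_card_eq_zero_of_charpoly_eq_X_pow {M : Matrix n n R}
    (h : M.charpoly = X ^ Fintype.card n) : M ^ Fintype.card n = 0 := by
  simpa [h] using M.aeval_self_charpoly

theorem charpoly_eq_X_pow_card_of_tendsto_smul_conj [TopologicalSpace R] [IsTopologicalRing R]
    [T2Space R] {ι : Type*} {l : Filter ι} [l.NeBot] {lam : ι → R} {g : ι → (Matrix n n R)ˣ}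
    {A B : Matrix n n R} (hlam : Tendsto lam l (𝓝 0))
    (hconv : Tendsto (fun i => lam i • ((g i : Matrix n n R) * A * (↑(g i)⁻¹ : Matrix n n R)))
      l (𝓝 B)) :
    B.charpoly = X ^ Fintype.card n := by
  refine charpoly_eq_X_pow_card_of_coeff_eq_zero fun k hk => ?_
  have hcoeff : ∀ i,
      (lam i • ((g i : Matrix n n R) * A * (↑(g i)⁻¹ : Matrix n n R))).charpoly.coeff k =
        lam i ^ (Fintype.card n - k) * A.charpoly.coeff k := fun i => by
    rw [charpoly_coeff_smul _ _ (Nat.add_sub_of_le hk.le), charpoly_units_conj_inv]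
  have hzero : Tendsto (fun i => lam i ^ (Fintype.card n - k) * A.charpoly.coeff k) l (𝓝 0) := by
    simpa [zero_pow (Nat.sub_ne_zero_of_lt hk)] using
      (hlam.pow (Fintype.card n - k)).mul_const (A.charpoly.coeff k)
  exact tendsto_nhds_unique (((continuous_charpoly_coeff k).tendsto B).comp hconv)
    (hzero.congr fun i => (hcoeff i).symm)

end Matrix

theorem limit_of_rescaled_conjugates_nilpotent_general
    (K : Type*) [Field K] [TopologicalSpace K] [IsTopologicalRing K] [T2Space K]
    (N : ℕ) (X : Matrix (Fin N) (Fin N) K)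
    (g : ℕ → (Matrix (Fin N) (Fin N) K)ˣ) (lam : ℕ → K)
    (hlam : Tendsto lam atTop (𝓝 0))
    (Z : Matrix (Fin N) (Fin N) K)
    (hconv : Tendsto
      (fun i => lam i • ((g i : Matrix (Fin N) (Fin N) K) * X *
        ((g i)⁻¹ : (Matrix (Fin N) (Fin N) K)ˣ)))
      atTop (𝓝 Z)) :
    Z ^ N = 0 := by
  simpa using Matrix.pow_card_eq_zero_of_charpoly_eq_X_pow
    (Matrix.charpoly_eq_X_pow_card_of_tendsto_smul_conj hlam hconv)

/-- Over a Hausdorff topological field, if a sequence of rescaled conjugates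
`λ_i • (g_i * X * g_i⁻¹)` (with `λ_i → 0` and `g_i` invertible) converges entrywise to a
matrix `Z`, then `Z` is nilpotent; in fact `Z ^ N = 0`. -/
theorem limit_of_rescaled_conjugates_nilpotent
    (K : Type*) [Field K] [TopologicalSpace K] [IsTopologicalRing K] [T2Space K]
    (N : ℕ) (hN : 0 < N) (X : Matrix (Fin N) (Fin N) K)
    (g : ℕ → (Matrix (Fin N) (Fin N) K)ˣ) (lam : ℕ → K)
    (hlam : Tendsto lam atTop (𝓝 0))
    (Z : Matrix (Fin N) (Fin N) K)
    (hconv : Tendsto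
      (fun i => lam i • ((g i : Matrix (Fin N) (Fin N) K) * X *
        ((g i)⁻¹ : (Matrix (Fin N) (Fin N) K)ˣ)))
      atTop (𝓝 Z)) :
    Z ^ N = 0 :=
  limit_of_rescaled_conjugates_nilpotent_general K N X g lam hlam Z hconv
end

section
/- Let K be a field of characteristic different from 2, let 𝔤 be a Lie algebra over K, and let θ be a Lie algebra automorphism of 𝔤 with θ ∘ θ = id. Set 𝔥 := {x ∈ 𝔤 : θ(x) = x} and 𝔰 := {x ∈ 𝔤 : θ(x) = −x}. Let X ∈ 𝔰 and suppose that 𝔤 is the internal direct sum of the kernel and the range of ad(X) (as K-submodules). Then 𝔰 is the internal direct sum of 𝔰 ∩ ker(ad X) and (ad X)(𝔥); that is, 𝔰 = 𝔰_X ⊕ [𝔥, X], where 𝔰_X denotes the centralizer of X in 𝔰. -/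
/-!
Since `θ X = -X`, `ad X` anticommutes with `θ`; hence it maps `𝔥` into `𝔰` and `θ` preserves
its kernel. For `s ∈ 𝔰` write `s = k + [X, y]` with `[X, k] = 0`; applying `θ` and averaging
gives `s = ½ (k - θ k) + [X, ½ (y + θ y)]`, with `½ (k - θ k) ∈ 𝔰_X` and `½ (y + θ y) ∈ 𝔥`.
-/

open LinearMap

section Involution

variable {R M : Type*} [Ring R] [AddCommGroup M] [Module R M] {θ A : M →ₗ[R] M}

lemma sub_apply_mem_ker_add_id (hθ : ∀ x, θ (θ x) = x) (x : M) :
    x - θ x ∈ ker (θ + LinearMap.id) := by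
  simp [hθ]

lemma add_apply_mem_ker_sub_id (hθ : ∀ x, θ (θ x) = x) (x : M) :
    x + θ x ∈ ker (θ - LinearMap.id) := by
  simp [hθ, add_comm]

lemma map_ker_sub_id_le_ker_add_id (hA : ∀ x, θ (A x) = -A (θ x)) :
    (ker (θ - LinearMap.id)).map A ≤ ker (θ + LinearMap.id) := by
  rintro _ ⟨y, hy, rfl⟩
  have hθy : θ y = y := sub_eq_zero.mp hy
  simp [hA, hθy]

lemma apply_mem_ker_of_anticomm (hA : ∀ x, θ (A x) = -A (θ x)) {k : M} (hk : k ∈ ker A) :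
    θ k ∈ ker A := by
  simpa [mem_ker.mp hk] using (hA k).symm

lemma ker_add_id_le_sup_map_ker_sub_id [Invertible (2 : R)] (hθ : ∀ x, θ (θ x) = x)
    (hA : ∀ x, θ (A x) = -A (θ x)) (hsup : ker A ⊔ range A = ⊤) :
    ker (θ + LinearMap.id) ≤
      (ker (θ + LinearMap.id) ⊓ ker A) ⊔ (ker (θ - LinearMap.id)).map A := by
  intro s hs
  have hθs : θ s = -s := eq_neg_of_add_eq_zero_left hs
  obtain ⟨k, hk, _, ⟨y, rfl⟩, rfl⟩ :=
    Submodule.mem_sup.mp (hsup ▸ Submodule.mem_top : s ∈ ker A ⊔ range A)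
  have hdouble : (2 : R) • (k + A y) = (k - θ k) + A (y + θ y) := by
    have h := congrArg Neg.neg hθs
    rw [neg_neg, map_add, hA, neg_add, neg_neg] at h
    calc (2 : R) • (k + A y) = (k + A y) + (-θ k + A (θ y)) := by rw [two_smul, ← h]
      _ = (k - θ k) + A (y + θ y) := by rw [map_add]; abel
  have hs_eq : k + A y = ⅟(2 : R) • (k - θ k) + A (⅟(2 : R) • (y + θ y)) := by
    rw [map_smul, ← smul_add, ← hdouble, smul_smul, invOf_mul_self, one_smul]
  rw [hs_eq]
  refine Submodule.add_mem_sup ⟨?_, ?_⟩ ⟨_, ?_, rfl⟩ <;> refine Submodule.smul_mem _ _ ?_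
  · exact sub_apply_mem_ker_add_id hθ k
  · exact Submodule.sub_mem _ hk (apply_mem_ker_of_anticomm hA hk)
  · exact add_apply_mem_ker_sub_id hθ y

end Involution

lemma LieHom.apply_ad_eq_neg_of_apply_eq_neg {K L : Type*} [CommRing K] [LieRing L]
    [LieAlgebra K L] (θ : L →ₗ⁅K⁆ L) {X : L} (hX : θ X = -X) (y : L) :
    θ (LieAlgebra.ad K L X y) = -LieAlgebra.ad K L X (θ y) := by
  rw [LieAlgebra.ad_apply, LieAlgebra.ad_apply, LieHom.map_lie, hX, neg_lie]

/-- Let `θ` be an involutive automorphism of a Lie algebra `𝔤` over a field of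
characteristic different from 2, with `𝔥` the `+1`-eigenspace and `𝔰` the `-1`-eigenspace.
If `𝔤` is the internal direct sum of the kernel and the range of `ad X` for some `X ∈ 𝔰`,
then `𝔰` is the internal direct sum of `𝔰 ∩ ker (ad X)` and `(ad X)(𝔥)`. -/
theorem symmetric_pair_tangent_decomposition
    (K : Type*) [Field K] (hchar : (2 : K) ≠ 0)
    (L : Type*) [LieRing L] [LieAlgebra K L]
    (θ : L →ₗ⁅K⁆ L) (hinv : ∀ x : L, θ (θ x) = x)
    (X : L)
    (hX : X ∈ LinearMap.ker ((θ : L →ₗ[K] L) + LinearMap.id))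
    (hker_range_inf :
      LinearMap.ker (LieAlgebra.ad K L X) ⊓ LinearMap.range (LieAlgebra.ad K L X) = ⊥)
    (hker_range_sup :
      LinearMap.ker (LieAlgebra.ad K L X) ⊔ LinearMap.range (LieAlgebra.ad K L X) = ⊤) :
    ((LinearMap.ker ((θ : L →ₗ[K] L) + LinearMap.id) ⊓ LinearMap.ker (LieAlgebra.ad K L X)) ⊓
        Submodule.map (LieAlgebra.ad K L X)
          (LinearMap.ker ((θ : L →ₗ[K] L) - LinearMap.id)) = ⊥) ∧
    ((LinearMap.ker ((θ : L →ₗ[K] L) + LinearMap.id) ⊓ LinearMap.ker (LieAlgebra.ad K L X)) ⊔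
        Submodule.map (LieAlgebra.ad K L X)
          (LinearMap.ker ((θ : L →ₗ[K] L) - LinearMap.id)) =
      LinearMap.ker ((θ : L →ₗ[K] L) + LinearMap.id)) := by
  have : Invertible (2 : K) := invertibleOfNonzero hchar
  have hanti := θ.apply_ad_eq_neg_of_apply_eq_neg (eq_neg_of_add_eq_zero_left hX)
  refine ⟨eq_bot_iff.2 (hker_range_inf ▸ inf_le_inf inf_le_right map_le_range), ?_⟩
  exact le_antisymm (sup_le inf_le_left (map_ker_sub_id_le_ker_add_id hanti))
    (ker_add_id_le_sup_map_ker_sub_id hinv hanti hker_range_sup)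
end
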